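/- Let H₊ and H be complex Hilbert spaces, x, X : H₊ → H bounded operators, and b a bounded self-adjoint operator on H₊. Set x_b := x∘cosh b + X∘sinh b and X_b := x∘sinh b + X∘cosh b (cosh and sinh via the operator exponential). Then x_b*x_b + X_b*X_b + X_b*x_b + x_b*X_b = e^b∘(x*x + X*X + X*x + x*X)∘e^b and x_b*x_b + X_b*X_b − X_b*x_b − x_b*X_b = e^{−b}∘(x*x + X*X − X*x − x*X)∘e^{−b}; consequently (x_b*x_b + X_b*X_b − X_b*x_b − x_b*X_b)(x_b*x_b + X_b*X_b + X_b*x_b + x_b*X_b) = e^{−b}∘(x*x + X*X − X*x − x*X)(x*x + X*X + X*x + x*X)∘e^{b}. -/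

import Mathlib

/- STATEMENT 13 (transformation rule of `μ₃ ± μ₄` under the `I₃`-action of `exp i𝔤`,
from the proof of Lemma `dx`): with `x_b = x cosh b + X sinh b`,
`X_b = x sinh b + X cosh b` for `b` bounded self-adjoint,
`(x_b*x_b + X_b*X_b) + (X_b*x_b + x_b*X_b) = e^b (x*x + X*X + X*x + x*X) e^b`,
`(x_b*x_b + X_b*X_b) − (X_b*x_b + x_b*X_b) = e^{−b} (x*x + X*X − X*x − x*X) e^{−b}`,
and consequently the product identity
`(… − …)(… + …) = e^{−b} (x*x + X*X − X*x − x*X)(x*x + X*X + X*x + x*X) e^{b}`. -/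

noncomputable section
open ContinuousLinearMap

/-- `cosh b = (e^b + e^{−b})/2` via the operator exponential. -/
def opCosh {E : Type*} [NormedAddCommGroup E] [InnerProductSpace ℂ E] [CompleteSpace E]
    (b : E →L[ℂ] E) : E →L[ℂ] E :=
  (2 : ℂ)⁻¹ • (NormedSpace.exp b + NormedSpace.exp (-b))

/-- `sinh b = (e^b − e^{−b})/2` via the operator exponential. -/
def opSinh {E : Type*} [NormedAddCommGroup E] [InnerProductSpace ℂ E] [CompleteSpace E]
    (b : E →L[ℂ] E) : E →L[ℂ] E :=
  (2 : ℂ)⁻¹ • (NormedSpace.exp b - NormedSpace.exp (-b))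

set_option maxHeartbeats 2000000 in
theorem statement13
    (Hplus : Type) [NormedAddCommGroup Hplus] [InnerProductSpace ℂ Hplus]
    [CompleteSpace Hplus]
    (H : Type) [NormedAddCommGroup H] [InnerProductSpace ℂ H] [CompleteSpace H]
    (x X : Hplus →L[ℂ] H)
    (b : Hplus →L[ℂ] Hplus) (hb : IsSelfAdjoint b)
    (xb Xb : Hplus →L[ℂ] H)
    (hxb : xb = x ∘L opCosh b + X ∘L opSinh b)
    (hXb : Xb = x ∘L opSinh b + X ∘L opCosh b) :
    (adjoint xb ∘L xb + adjoint Xb ∘L Xb + adjoint Xb ∘L xb + adjoint xb ∘L Xb =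
      NormedSpace.exp b ∘L
        ((adjoint x ∘L x + adjoint X ∘L X + adjoint X ∘L x + adjoint x ∘L X) ∘L
          NormedSpace.exp b)) ∧
    (adjoint xb ∘L xb + adjoint Xb ∘L Xb - adjoint Xb ∘L xb - adjoint xb ∘L Xb =
      NormedSpace.exp (-b) ∘L
        ((adjoint x ∘L x + adjoint X ∘L X - adjoint X ∘L x - adjoint x ∘L X) ∘L
          NormedSpace.exp (-b))) ∧
    ((adjoint xb ∘L xb + adjoint Xb ∘L Xb - adjoint Xb ∘L xb - adjoint xb ∘L Xb) ∘L
        (adjoint xb ∘L xb + adjoint Xb ∘L Xb + adjoint Xb ∘L xb + adjoint xb ∘L Xb) =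
      NormedSpace.exp (-b) ∘L
        (((adjoint x ∘L x + adjoint X ∘L X - adjoint X ∘L x - adjoint x ∘L X) ∘L
            (adjoint x ∘L x + adjoint X ∘L X + adjoint X ∘L x + adjoint x ∘L X)) ∘L
          NormedSpace.exp b)) := by
  set E := NormedSpace.exp b with hEdef
  set F := NormedSpace.exp (-b) with hFdef
  have hE : adjoint E = E := by
    rw [hEdef, ← star_eq_adjoint, NormedSpace.star_exp, hb.star_eq]
  have hF : adjoint F = F := by
    rw [hFdef, ← star_eq_adjoint, NormedSpace.star_exp, star_neg, hb.star_eq]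
  have hFE : F ∘L E = 1 := by
    have := NormedSpace.exp_add_of_commute_of_mem_ball (𝕂 := ℂ) ((Commute.refl b).neg_left)
      ((NormedSpace.expSeries_radius_eq_top ℂ (Hplus →L[ℂ] Hplus)).symm ▸ edist_lt_top _ _)
      ((NormedSpace.expSeries_radius_eq_top ℂ (Hplus →L[ℂ] Hplus)).symm ▸ edist_lt_top _ _)
    simp at this
    exact this.symm
  have hCS : opCosh b + opSinh b = E := by
    rw [opCosh, opSinh, ← smul_add]
    rw [show NormedSpace.exp b + NormedSpace.exp (-b) +
        (NormedSpace.exp b - NormedSpace.exp (-b)) = (2 : ℂ) • NormedSpace.exp b by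
      rw [two_smul]; abel]
    rw [smul_smul]; norm_num; rfl
  have hCS' : opCosh b - opSinh b = F := by
    rw [opCosh, opSinh, ← smul_sub]
    rw [show NormedSpace.exp b + NormedSpace.exp (-b) -
        (NormedSpace.exp b - NormedSpace.exp (-b)) = (2 : ℂ) • NormedSpace.exp (-b) by
      rw [two_smul]; abel]
    rw [smul_smul]; norm_num; rfl
  have hsum : xb + Xb = (x + X) ∘L E := by
    rw [hxb, hXb, ← hCS, add_comp, comp_add, comp_add]; abel
  have hdiff : Xb - xb = (X - x) ∘L F := by
    rw [hxb, hXb, ← hCS', sub_comp, comp_sub, comp_sub]; abel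
  have goal1 : adjoint xb ∘L xb + adjoint Xb ∘L Xb + adjoint Xb ∘L xb + adjoint xb ∘L Xb =
      E ∘L ((adjoint x ∘L x + adjoint X ∘L X + adjoint X ∘L x + adjoint x ∘L X) ∘L E) := by
    have h1 : adjoint (xb + Xb) ∘L (xb + Xb) = adjoint ((x + X) ∘L E) ∘L ((x + X) ∘L E) := by
      rw [hsum]
    rw [show adjoint (xb + Xb) = adjoint xb + adjoint Xb from map_add adjoint xb Xb] at h1
    rw [adjoint_comp, hE, show adjoint (x + X) = adjoint x + adjoint X from map_add adjoint x X] at h1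
    simp only [add_comp, comp_add, sub_comp, comp_sub, comp_assoc] at h1 ⊢
    rw [show adjoint xb ∘L xb + adjoint Xb ∘L Xb + adjoint Xb ∘L xb + adjoint xb ∘L Xb =
        (adjoint xb + adjoint Xb) ∘L (xb + Xb) by
      simp only [add_comp, comp_add]; abel]
    simp only [add_comp, comp_add, sub_comp, comp_sub, comp_assoc] at h1 ⊢
    rw [h1]; abel
  have goal2 : adjoint xb ∘L xb + adjoint Xb ∘L Xb - adjoint Xb ∘L xb - adjoint xb ∘L Xb =
      F ∘L ((adjoint x ∘L x + adjoint X ∘L X - adjoint X ∘L x - adjoint x ∘L X) ∘L F) := by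
    have h1 : adjoint (Xb - xb) ∘L (Xb - xb) = adjoint ((X - x) ∘L F) ∘L ((X - x) ∘L F) := by
      rw [hdiff]
    rw [adjoint_comp, hF] at h1
    rw [show adjoint (Xb - xb) = adjoint Xb - adjoint xb from map_sub adjoint Xb xb,
      show adjoint (X - x) = adjoint X - adjoint x from map_sub adjoint X x] at h1
    rw [show adjoint xb ∘L xb + adjoint Xb ∘L Xb - adjoint Xb ∘L xb - adjoint xb ∘L Xb =
        (adjoint Xb - adjoint xb) ∘L (Xb - xb) by
      simp only [sub_comp, comp_sub]; abel]
    simp only [add_comp, comp_add, sub_comp, comp_sub, comp_assoc] at h1 ⊢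
    rw [h1]; abel
  refine ⟨goal1, goal2, ?_⟩
  rw [goal1, goal2]
  simp only [comp_assoc]
  rw [← comp_assoc F E, hFE, one_def, id_comp]
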